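/- arXiv:2408.06386 — 3 statements merged into one kernel-verified Lean document; each statement's English description precedes it below -/
import Mathlib

section
/- Let ρ be an n×n density matrix with eigenvalue vector λ↓(ρ) (sorted nonincreasingly). The set of diagonal vectors {diag(UρU†) : U unitary} equals the set {u ∈ ℝⁿ : u ≺ λ↓(ρ)} of all vectors majorized by λ↓(ρ). -/
open Matrix ComplexOrder

/-- Sum of the `k` largest entries of `x`. -/
noncomputable def kLargestSum {n : ℕ} (x : Fin n → ℝ) (k : ℕ) : ℝ :=
  sSup ((fun s : Finset (Fin n) => ∑ i ∈ s, x i) '' {s | s.card = k})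

/-- `x` is majorized by `y` in `ℝⁿ`. -/
def Maj {n : ℕ} (x y : Fin n → ℝ) : Prop :=
  (∀ k, k < n → kLargestSum x k ≤ kLargestSum y k) ∧ (∑ i, x i = ∑ i, y i)

/-- `x` rearranged in nondecreasing order. -/
noncomputable def sortAsc {n : ℕ} (x : Fin n → ℝ) : Fin n → ℝ := x ∘ (Tuple.sort x)

/-- `x` rearranged in nonincreasing order. -/
noncomputable def sortDesc {n : ℕ} (x : Fin n → ℝ) : Fin n → ℝ := fun i => sortAsc x i.rev

/-!
Write `ρ = V diag(λ) V†`; then the diagonals of the unitary orbit of `ρ` are those of the orbit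
of `diag(λ)`, and `(U diag(λ) U†)ᵢᵢ = ∑ⱼ |Uᵢⱼ|² λⱼ`. The matrix `(|Uᵢⱼ|²)` is doubly stochastic,
and a doubly stochastic image of `λ` is majorized by `λ`: a sum of `k` of its entries is a
combination of the `λⱼ` with weights in `[0, 1]` of total mass `k`, which is at most the sum of the
`k` largest `λⱼ`.

Conversely (Horn), let `x ≺ y` be sorted nonincreasingly and pick `j` with
`y (j + 1) ≤ x 0 ≤ y j`. A real reflection in the plane of these two coordinates turns `diag(y)`
into a matrix with corner entry `x 0` whose complementary block is diagonal, with the pair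
`y j, y (j + 1)` replaced by `y j + y (j + 1) - x 0`. The remaining entries of `x` are majorized by
this diagonal, so induction on the dimension provides a unitary for the block.
-/

open Finset

variable {n : ℕ}

lemma kLargestSum_eq_sup' (x : Fin n → ℝ) {k : ℕ} (hk : k ≤ n) :
    kLargestSum x k = (univ.powersetCard k).sup'
      (powersetCard_nonempty.2 (by simpa using hk)) (fun s => ∑ i ∈ s, x i) := by
  rw [sup'_eq_csSup_image, kLargestSum]
  congr
  ext s
  simp

lemma sum_le_kLargestSum (x : Fin n → ℝ) {s : Finset (Fin n)} :
    ∑ i ∈ s, x i ≤ kLargestSum x s.card := by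
  rw [kLargestSum_eq_sup' x (by simpa using s.card_le_univ)]
  exact le_sup' (fun s => ∑ i ∈ s, x i) (mem_powersetCard_univ.2 rfl)

lemma kLargestSum_le (x : Fin n → ℝ) {k : ℕ} (hk : k ≤ n) {c : ℝ}
    (h : ∀ s : Finset (Fin n), s.card = k → ∑ i ∈ s, x i ≤ c) : kLargestSum x k ≤ c := by
  rw [kLargestSum_eq_sup' x hk]
  exact sup'_le _ _ fun s hs => h s (mem_powersetCard_univ.1 hs)

lemma exists_sum_eq_kLargestSum (x : Fin n → ℝ) {k : ℕ} (hk : k ≤ n) :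
    ∃ s : Finset (Fin n), s.card = k ∧ ∑ i ∈ s, x i = kLargestSum x k := by
  obtain ⟨s, hs, h⟩ := exists_mem_eq_sup' (powersetCard_nonempty.2 (by simpa using hk) :
    (univ.powersetCard k : Finset (Finset (Fin n))).Nonempty) (fun s => ∑ i ∈ s, x i)
  exact ⟨s, mem_powersetCard_univ.1 hs, by rw [kLargestSum_eq_sup' x hk, h]⟩

lemma kLargestSum_comp_perm (x : Fin n → ℝ) (σ : Equiv.Perm (Fin n)) (k : ℕ) :
    kLargestSum (x ∘ σ) k = kLargestSum x k := by
  unfold kLargestSum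
  congr 1
  ext r
  constructor
  · rintro ⟨s, hs, rfl⟩
    exact ⟨s.map σ.toEmbedding, by simpa using hs, by simp⟩
  · rintro ⟨s, hs, rfl⟩
    refine ⟨s.map σ.symm.toEmbedding, by simpa using hs, ?_⟩
    simp

lemma maj_comp_perm_iff {x y : Fin n → ℝ} (σ τ : Equiv.Perm (Fin n)) :
    Maj (x ∘ σ) (y ∘ τ) ↔ Maj x y := by
  simp only [Maj, kLargestSum_comp_perm, Function.comp_apply, Equiv.sum_comp]

lemma sum_mul_le_sum_of_forall_le {y c : Fin n → ℝ} {t : Finset (Fin n)}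
    (ht : ∀ j ∈ t, ∀ j' ∉ t, y j' ≤ y j) (hc₀ : ∀ j, 0 ≤ c j) (hc₁ : ∀ j, c j ≤ 1)
    (hc : ∑ j, c j = t.card) : ∑ j, c j * y j ≤ ∑ j ∈ t, y j := by
  rcases t.eq_empty_or_nonempty with rfl | hne
  · have hc0 : ∀ j, c j = 0 := by
      simpa [sum_eq_zero_iff_of_nonneg fun j _ => hc₀ j] using hc
    simp [hc0]
  obtain ⟨j₀, hj₀, hmin⟩ := t.exists_min_image y hne
  set θ := y j₀
  have key : ∑ j, c j * y j - ∑ j ∈ t, y j =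
      ∑ j, (c j - if j ∈ t then 1 else 0) * (y j - θ) := by
    simp only [sub_mul, mul_sub, sum_sub_distrib, ← sum_mul, hc, ite_mul, one_mul, zero_mul,
      sum_ite_mem, univ_inter, sum_const, nsmul_eq_mul]
    ring
  have hterm : ∀ j, (c j - if j ∈ t then 1 else 0) * (y j - θ) ≤ 0 := by
    intro j
    by_cases hj : j ∈ t
    · rw [if_pos hj]
      exact mul_nonpos_of_nonpos_of_nonneg (by linarith [hc₁ j]) (by linarith [hmin j hj])
    · rw [if_neg hj, sub_zero]
      exact mul_nonpos_of_nonneg_of_nonpos (hc₀ j) (by linarith [ht j₀ hj₀ j hj])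
  linarith [sum_nonpos fun j (_ : j ∈ univ) => hterm j]

lemma sum_mul_le_kLargestSum {y c : Fin n → ℝ} {k : ℕ} (hk : k ≤ n)
    (hc₀ : ∀ j, 0 ≤ c j) (hc₁ : ∀ j, c j ≤ 1) (hc : ∑ j, c j = k) :
    ∑ j, c j * y j ≤ kLargestSum y k := by
  obtain ⟨t, rfl, ht⟩ := exists_sum_eq_kLargestSum y hk
  rw [← ht]
  refine sum_mul_le_sum_of_forall_le (fun j hj j' hj' => ?_) hc₀ hc₁ hc
  have hcard : (insert j' (t.erase j)).card = t.card := by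
    rw [card_insert_of_notMem (fun h => hj' (mem_of_mem_erase h)), card_erase_add_one hj]
  have := sum_le_kLargestSum y (s := insert j' (t.erase j))
  rw [hcard, ← ht, sum_insert (fun h => hj' (mem_of_mem_erase h)), ← add_sum_erase t y hj] at this
  linarith

def prefixSum (x : Fin n → ℝ) (k : ℕ) : ℝ := ∑ i : Fin n with i.val < k, x i

lemma prefixSum_eq_sum_ite (x : Fin n → ℝ) (k : ℕ) :
    prefixSum x k = ∑ i : Fin n, if (i : ℕ) < k then x i else 0 :=
  sum_filter _ _

@[simp] lemma prefixSum_zero (x : Fin n → ℝ) : prefixSum x 0 = 0 := by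
  simp [prefixSum]

lemma prefixSum_of_le (x : Fin n → ℝ) {k : ℕ} (h : n ≤ k) : prefixSum x k = ∑ i, x i := by
  rw [prefixSum_eq_sum_ite]
  exact sum_congr rfl fun i _ => if_pos (i.2.trans_le h)

lemma prefixSum_succ_eq_add_comp_succ (x : Fin (n + 1) → ℝ) (k : ℕ) :
    prefixSum x (k + 1) = x 0 + prefixSum (x ∘ Fin.succ) k := by
  simp [prefixSum_eq_sum_ite, Fin.sum_univ_succ]

lemma prefixSum_succ_eq_add_of_lt (x : Fin n → ℝ) {k : ℕ} (hk : k < n) :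
    prefixSum x (k + 1) = prefixSum x k + x ⟨k, hk⟩ := by
  simp only [prefixSum_eq_sum_ite]
  rw [← sum_erase_add _ _ (mem_univ ⟨k, hk⟩), ← sum_erase_add _ _ (mem_univ ⟨k, hk⟩)]
  simp only [lt_add_one, if_true, lt_irrefl, if_false, add_zero]
  congr 1
  refine sum_congr rfl fun i hi => ?_
  have : (i : ℕ) ≠ k := fun h => (mem_erase.1 hi).1 (Fin.ext h)
  simp only [Nat.lt_succ_iff_lt_or_eq, this, or_false]

lemma sum_eq_prefixSum_add_last (x : Fin (n + 1) → ℝ) :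
    ∑ i, x i = prefixSum x n + x (Fin.last n) := by
  rw [← prefixSum_of_le x le_rfl]
  exact prefixSum_succ_eq_add_of_lt x (Nat.lt_succ_self n)

lemma prefixSum_le_kLargestSum (x : Fin n → ℝ) {k : ℕ} (hk : k ≤ n) :
    prefixSum x k ≤ kLargestSum x k := by
  simpa [prefixSum, Fin.card_filter_val_lt, min_eq_right hk] using
    sum_le_kLargestSum x (s := {i : Fin n | (i : ℕ) < k})

lemma Antitone.kLargestSum_eq_prefixSum {x : Fin n → ℝ} (hx : Antitone x) {k : ℕ}
    (hk : k ≤ n) : kLargestSum x k = prefixSum x k := by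
  refine le_antisymm (kLargestSum_le x hk fun s hs => ?_) (prefixSum_le_kLargestSum x hk)
  set I : Finset (Fin n) := {i | (i : ℕ) < k}
  have hsep : ∀ j ∈ I, ∀ j' ∉ I, x j' ≤ x j := by
    intro j hj j' hj'
    simp only [I, mem_filter, mem_univ, true_and, not_lt] at hj hj'
    exact hx (Fin.le_def.2 (by omega))
  have := sum_mul_le_sum_of_forall_le (c := fun j => if j ∈ s then 1 else 0) hsep
    (fun j => by positivity) (fun j => by split_ifs <;> norm_num)
    (by simp [I, Fin.card_filter_val_lt, min_eq_right hk, hs])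
  simpa [prefixSum, ite_mul, sum_ite_mem] using this

lemma maj_iff_prefixSum {x y : Fin n → ℝ} (hx : Antitone x) (hy : Antitone y) :
    Maj x y ↔ (∀ k, prefixSum x k ≤ prefixSum y k) ∧ ∑ i, x i = ∑ i, y i := by
  refine and_congr_left fun hsum => ⟨fun h k => ?_, fun h k hk => ?_⟩
  · rcases lt_or_ge k n with hk | hk
    · simpa [hx.kLargestSum_eq_prefixSum hk.le, hy.kLargestSum_eq_prefixSum hk.le] using h k hk
    · rw [prefixSum_of_le x hk, prefixSum_of_le y hk, hsum]
  · rw [hx.kLargestSum_eq_prefixSum hk.le, hy.kLargestSum_eq_prefixSum hk.le]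
    exact h k

lemma prefixSum_update (x : Fin n → ℝ) (j : Fin n) (b : ℝ) (k : ℕ) :
    prefixSum (Function.update x j b) k = prefixSum x k + if (j : ℕ) < k then b - x j else 0 := by
  simp only [prefixSum_eq_sum_ite]
  rw [← Fintype.sum_ite_eq' j (fun _ => if (j : ℕ) < k then b - x j else 0), ← sum_add_distrib]
  refine sum_congr rfl fun i _ => ?_
  by_cases hij : i = j
  · subst hij
    by_cases h : (i : ℕ) < k <;> simp [h]
  · simp [hij]

lemma prefixSum_comp_succAbove (y : Fin (n + 1) → ℝ) (p : Fin (n + 1)) (k : ℕ) :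
    prefixSum (y ∘ p.succAbove) k =
      if k ≤ p then prefixSum y k else prefixSum y (k + 1) - y p := by
  have hval : ∀ i : Fin n, ((p.succAbove i : ℕ) = i ∧ (i : ℕ) < p) ∨
      ((p.succAbove i : ℕ) = i + 1 ∧ (p : ℕ) ≤ i) := by
    intro i
    rcases lt_or_ge i.castSucc p with h | h
    · exact Or.inl ⟨by rw [Fin.succAbove_of_castSucc_lt _ _ h]; rfl, h⟩
    · exact Or.inr ⟨by rw [Fin.succAbove_of_le_castSucc _ _ h]; rfl, h⟩
  have hcongr : ∀ k' : ℕ, (∀ i : Fin n, (i : ℕ) < k ↔ (p.succAbove i : ℕ) < k') →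
      ∑ i : Fin n, (if (i : ℕ) < k then y (p.succAbove i) else 0) =
        ∑ i : Fin n, if (p.succAbove i : ℕ) < k' then y (p.succAbove i) else 0 :=
    fun k' h => sum_congr rfl fun i _ => by simp only [h]
  simp only [prefixSum_eq_sum_ite, Function.comp_apply]
  split_ifs with hk
  · rw [Fin.sum_univ_succAbove _ p, if_neg (by omega), zero_add]
    exact hcongr k fun i => by rcases hval i with ⟨h, hi⟩ | ⟨h, hi⟩ <;> omega
  · rw [Fin.sum_univ_succAbove _ p, if_pos (by omega), add_sub_cancel_left]
    exact hcongr (k + 1) fun i => by rcases hval i with ⟨h, hi⟩ | ⟨h, hi⟩ <;> omega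

/-- The pair `y j, y (j + 1)` merged into the single entry `y j + y (j + 1) - a`. -/
def mergeAt (y : Fin (n + 1) → ℝ) (j : Fin n) (a : ℝ) : Fin n → ℝ :=
  Function.update (y ∘ j.castSucc.succAbove) j (y j.castSucc + y j.succ - a)

lemma prefixSum_mergeAt (y : Fin (n + 1) → ℝ) (j : Fin n) (a : ℝ) (k : ℕ) :
    prefixSum (mergeAt y j a) k = if k ≤ j then prefixSum y k else prefixSum y (k + 1) - a := by
  rw [mergeAt, prefixSum_update, prefixSum_comp_succAbove]
  simp only [Fin.val_castSucc, Function.comp_apply, Fin.succAbove_castSucc_self]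
  split_ifs <;> first | omega | ring1

lemma antitone_mergeAt {y : Fin (n + 1) → ℝ} (hy : Antitone y) {j : Fin n} {a : ℝ}
    (hlo : y j.succ ≤ a) (hhi : a ≤ y j.castSucc) : Antitone (mergeAt y j a) := by
  have hz : Antitone (y ∘ j.castSucc.succAbove) :=
    hy.comp_monotone (Fin.strictMono_succAbove _).monotone
  intro i i' hii'
  rcases eq_or_ne i j with rfl | hi
  · rcases eq_or_ne i' i with rfl | hi'
    · exact le_rfl
    have := hz hii'
    simp only [Function.comp_apply, Fin.succAbove_castSucc_self] at this
    simp only [mergeAt, Function.update_self, Function.update_of_ne hi', Function.comp_apply]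
    linarith
  rcases eq_or_ne i' j with rfl | hi'
  · have hlt : i.castSucc < i'.castSucc := Fin.castSucc_lt_castSucc_iff.2 (lt_of_le_of_ne hii' hi)
    have := hy hlt.le
    simp only [mergeAt, Function.update_self, Function.update_of_ne hi, Function.comp_apply,
      Fin.succAbove_of_castSucc_lt _ _ hlt]
    linarith
  simpa [mergeAt, hi, hi'] using hz hii'

lemma maj_comp_succ_mergeAt {x y : Fin (n + 1) → ℝ} (hx : Antitone x) (hy : Antitone y)
    (h : Maj x y) {j : Fin n} (hlo : y j.succ ≤ x 0) (hhi : x 0 ≤ y j.castSucc) :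
    Maj (x ∘ Fin.succ) (mergeAt y j (x 0)) := by
  rw [maj_iff_prefixSum hx hy] at h
  rw [maj_iff_prefixSum (hx.comp_monotone (Fin.strictMono_succ).monotone)
    (antitone_mergeAt hy hlo hhi)]
  have hshift : ∀ k, prefixSum (x ∘ Fin.succ) k = prefixSum x (k + 1) - x 0 := fun k => by
    rw [prefixSum_succ_eq_add_comp_succ]; ring
  refine ⟨fun k => ?_, ?_⟩
  · rw [prefixSum_mergeAt, hshift]
    split_ifs with hk
    · have hkn : k < n + 1 := by omega
      have : x ⟨k, hkn⟩ ≤ x 0 := hx (Fin.zero_le _)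
      linarith [prefixSum_succ_eq_add_of_lt x hkn, h.1 k]
    · linarith [h.1 (k + 1)]
  · rw [← prefixSum_of_le _ le_rfl, ← prefixSum_of_le _ le_rfl, hshift, prefixSum_mergeAt,
      if_neg (by omega), prefixSum_of_le x le_rfl, prefixSum_of_le y le_rfl, h.2]

lemma exists_succ_le_le_castSucc (y : Fin (n + 2) → ℝ) {a : ℝ} (hlast : y (Fin.last (n + 1)) ≤ a)
    (h₀ : a ≤ y 0) : ∃ j : Fin (n + 1), y j.succ ≤ a ∧ a ≤ y j.castSucc := by
  by_contra! hcon
  have hle : ∀ k, a ≤ y k := fun k => by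
    induction k using Fin.induction with
    | zero => exact h₀
    | succ j ih => exact not_lt.1 fun h => (hcon j h.le).not_ge ih
  exact (hcon (Fin.last n) (by simpa using hlast)).not_ge (hle _)

section UnitaryOrbit

variable {ι : Type*} [Fintype ι] [DecidableEq ι]

def unitaryOrbitDiagonals (y : ι → ℝ) : Set (ι → ℝ) :=
  {x | ∃ U ∈ unitaryGroup ι ℂ, ∀ i, (U * diagonal (fun m => (y m : ℂ)) * Uᴴ) i i = x i}

lemma mul_diagonal_mul_conjTranspose_apply_self (U : Matrix ι ι ℂ) (y : ι → ℝ) (i : ι) :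
    (U * diagonal (fun m => (y m : ℂ)) * Uᴴ) i i =
      ((of fun i j => Complex.normSq (U i j)) *ᵥ y) i := by
  rw [mul_apply]
  simp only [mul_diagonal, conjTranspose_apply, mulVec, dotProduct, of_apply]
  push_cast
  refine sum_congr rfl fun j _ => ?_
  rw [← Complex.mul_conj, RCLike.star_def]
  ring

lemma normSq_mem_doublyStochastic {U : Matrix ι ι ℂ} (hU : U ∈ unitaryGroup ι ℂ) :
    of (fun i j => Complex.normSq (U i j)) ∈ doublyStochastic ℝ ι := by
  have hrow : ∀ i, ∑ j, Complex.normSq (U i j) = 1 := fun i => by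
    have := congrFun₂ (mem_unitaryGroup_iff.1 hU) i i
    simp only [mul_apply, star_apply, one_apply_eq, RCLike.star_def, Complex.mul_conj] at this
    exact_mod_cast this
  have hcol : ∀ j, ∑ i, Complex.normSq (U i j) = 1 := fun j => by
    have := congrFun₂ (mem_unitaryGroup_iff'.1 hU) j j
    simp only [mul_apply, star_apply, one_apply_eq, RCLike.star_def, mul_comm _ (U _ j),
      Complex.mul_conj] at this
    exact_mod_cast this
  exact mem_doublyStochastic_iff_sum.2 ⟨fun i j => Complex.normSq_nonneg _, hrow, hcol⟩

lemma comp_perm_mem_unitaryOrbitDiagonals {x y : ι → ℝ} (h : x ∈ unitaryOrbitDiagonals y)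
    (σ τ : Equiv.Perm ι) : x ∘ σ ∈ unitaryOrbitDiagonals (y ∘ τ) := by
  obtain ⟨U, hU, hx⟩ := h
  refine ⟨U.submatrix σ τ, ?_, fun i => ?_⟩
  · rw [mem_unitaryGroup_iff, star_eq_conjTranspose, conjTranspose_submatrix,
      submatrix_mul_equiv, ← star_eq_conjTranspose, mem_unitaryGroup_iff.1 hU, submatrix_one_equiv]
  · have hD : diagonal (fun m => ((y ∘ τ) m : ℂ)) = (diagonal fun m => (y m : ℂ)).submatrix τ τ :=
      (submatrix_diagonal_equiv (fun m => (y m : ℂ)) τ).symm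
    rw [hD, conjTranspose_submatrix, submatrix_mul_equiv, submatrix_mul_equiv]
    exact hx (σ i)

lemma comp_perm_mem_unitaryOrbitDiagonals_iff {x y : ι → ℝ} (σ τ : Equiv.Perm ι) :
    x ∘ σ ∈ unitaryOrbitDiagonals (y ∘ τ) ↔ x ∈ unitaryOrbitDiagonals y :=
  ⟨fun h => by
    simpa [Function.comp_assoc] using comp_perm_mem_unitaryOrbitDiagonals h σ.symm τ.symm,
    fun h => comp_perm_mem_unitaryOrbitDiagonals h σ τ⟩

lemma self_mem_unitaryOrbitDiagonals (y : ι → ℝ) : y ∈ unitaryOrbitDiagonals y :=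
  ⟨1, one_mem _, fun i => by simp⟩

end UnitaryOrbit

lemma maj_mulVec_of_mem_doublyStochastic {B : Matrix (Fin n) (Fin n) ℝ}
    (hB : B ∈ doublyStochastic ℝ (Fin n)) (y : Fin n → ℝ) : Maj (B *ᵥ y) y := by
  refine ⟨fun k hk => kLargestSum_le _ hk.le fun s hs => ?_, sum_mulVec_of_mem_doublyStochastic hB⟩
  have hswap : ∑ i ∈ s, (B *ᵥ y) i = ∑ j, (∑ i ∈ s, B i j) * y j := by
    simp only [mulVec, dotProduct, sum_mul]
    exact sum_comm
  rw [hswap]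
  have hB₀ : ∀ i j, 0 ≤ B i j := fun i j => nonneg_of_mem_doublyStochastic hB
  refine sum_mul_le_kLargestSum hk.le (fun j => sum_nonneg fun i _ => hB₀ i j) (fun j => ?_) ?_
  · calc ∑ i ∈ s, B i j ≤ ∑ i, B i j :=
          sum_le_sum_of_subset_of_nonneg (subset_univ s) fun i _ _ => hB₀ i j
      _ = 1 := sum_col_of_mem_doublyStochastic hB j
  · rw [sum_comm, sum_congr rfl fun i _ => sum_row_of_mem_doublyStochastic hB i]
    simp [hs]

lemma maj_of_mem_unitaryOrbitDiagonals {x y : Fin n → ℝ} (h : x ∈ unitaryOrbitDiagonals y) :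
    Maj x y := by
  obtain ⟨U, hU, hx⟩ := h
  convert maj_mulVec_of_mem_doublyStochastic (normSq_mem_doublyStochastic hU) y
  ext i
  exact_mod_cast ((hx i).symm.trans (mul_diagonal_mul_conjTranspose_apply_self U y i))

def extendByOne (V : Matrix (Fin n) (Fin n) ℂ) : Matrix (Fin (n + 1)) (Fin (n + 1)) ℂ :=
  of fun i k => Fin.cases (Fin.cases 1 0 k) (fun i' => Fin.cases 0 (V i') k) i

@[simp] lemma extendByOne_zero_zero (V : Matrix (Fin n) (Fin n) ℂ) : extendByOne V 0 0 = 1 := rfl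

@[simp] lemma extendByOne_zero_succ (V : Matrix (Fin n) (Fin n) ℂ) (k : Fin n) :
    extendByOne V 0 k.succ = 0 := rfl

@[simp] lemma extendByOne_succ_zero (V : Matrix (Fin n) (Fin n) ℂ) (i : Fin n) :
    extendByOne V i.succ 0 = 0 := rfl

@[simp] lemma extendByOne_succ_succ (V : Matrix (Fin n) (Fin n) ℂ) (i k : Fin n) :
    extendByOne V i.succ k.succ = V i k := rfl

lemma extendByOne_mem_unitaryGroup {V : Matrix (Fin n) (Fin n) ℂ}
    (hV : V ∈ unitaryGroup (Fin n) ℂ) : extendByOne V ∈ unitaryGroup (Fin (n + 1)) ℂ := by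
  rw [mem_unitaryGroup_iff] at hV ⊢
  ext i k
  cases i using Fin.cases <;> cases k using Fin.cases <;>
    simp [mul_apply, Fin.sum_univ_succ, one_apply, (Fin.succ_ne_zero _).symm]
  simpa [mul_apply, one_apply] using congrFun₂ hV _ _

lemma extendByOne_conj_zero_zero (V : Matrix (Fin n) (Fin n) ℂ)
    (M : Matrix (Fin (n + 1)) (Fin (n + 1)) ℂ) :
    (extendByOne V * M * (extendByOne V)ᴴ) 0 0 = M 0 0 := by
  simp [mul_apply, Fin.sum_univ_succ]

lemma extendByOne_conj_succ_succ (V : Matrix (Fin n) (Fin n) ℂ)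
    (M : Matrix (Fin (n + 1)) (Fin (n + 1)) ℂ) (i k : Fin n) :
    (extendByOne V * M * (extendByOne V)ᴴ) i.succ k.succ =
      (V * M.submatrix Fin.succ Fin.succ * Vᴴ) i k := by
  simp [mul_apply, Fin.sum_univ_succ, sum_mul]

/-- The reflection `[[c, s], [s, -c]]` in the plane of the coordinates `0` and `q + 1`. -/
def planeReflection (q : Fin n) (c s : ℝ) : Matrix (Fin (n + 1)) (Fin (n + 1)) ℂ :=
  of fun i k => Fin.cases (Fin.cases c (fun k' => if k' = q then s else 0) k)
    (fun i' => Fin.cases (if i' = q then s else 0)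
      (fun k' => if i' = k' then (if i' = q then -c else 1) else 0) k) i

lemma planeReflection_mem_unitaryGroup (q : Fin n) {c s : ℝ} (hcs : c ^ 2 + s ^ 2 = 1) :
    planeReflection q c s ∈ unitaryGroup (Fin (n + 1)) ℂ := by
  have h : (c : ℂ) * c + s * s = 1 := by
    exact_mod_cast (by linear_combination hcs : c * c + s * s = 1)
  rw [mem_unitaryGroup_iff]
  ext i k
  cases i using Fin.cases <;> cases k using Fin.cases <;>
    simp [planeReflection, mul_apply, Fin.sum_univ_succ, one_apply, apply_ite (starRingEnd ℂ),
      (Fin.succ_ne_zero _).symm] <;>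
    (try split_ifs) <;> subst_vars <;> (try simp_all) <;> first | ring1 | linear_combination h

lemma planeReflection_conj_zero_zero (q : Fin n) (c s : ℝ) (z : Fin (n + 1) → ℝ) :
    (planeReflection q c s * diagonal (fun m => (z m : ℂ)) * (planeReflection q c s)ᴴ) 0 0 =
      ((c ^ 2 * z 0 + s ^ 2 * z q.succ : ℝ) : ℂ) := by
  simp [planeReflection, mul_apply, Fin.sum_univ_succ, diagonal_apply, apply_ite (starRingEnd ℂ)]
  ring

lemma planeReflection_conj_submatrix_succ (q : Fin n) (c s : ℝ) (z : Fin (n + 1) → ℝ) :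
    (planeReflection q c s * diagonal (fun m => (z m : ℂ)) * (planeReflection q c s)ᴴ).submatrix
        Fin.succ Fin.succ =
      diagonal fun i =>
        (Function.update (z ∘ Fin.succ) q (s ^ 2 * z 0 + c ^ 2 * z q.succ) i : ℂ) := by
  ext i k
  simp [planeReflection, mul_apply, Fin.sum_univ_succ, diagonal_apply, apply_ite (starRingEnd ℂ)]
  split_ifs <;> simp_all
  ring

lemma exists_sq_add_sq_eq_one_and_eq {p q a : ℝ} (hq : q ≤ a) (hp : a ≤ p) :
    ∃ c s : ℝ, c ^ 2 + s ^ 2 = 1 ∧ c ^ 2 * p + s ^ 2 * q = a := by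
  obtain ⟨α, β, hα, hβ, hαβ, h⟩ : a ∈ segment ℝ q p := segment_eq_Icc (hq.trans hp) ▸ ⟨hq, hp⟩
  refine ⟨√β, √α, ?_, ?_⟩ <;> rw [Real.sq_sqrt hα, Real.sq_sqrt hβ]
  · linarith
  · simp only [smul_eq_mul] at h
    linarith

lemma mem_unitaryOrbitDiagonals_of_antitone {x y : Fin (n + 2) → ℝ} (hx : Antitone x)
    (hy : Antitone y) (h : Maj x y)
    (ih : ∀ x' y' : Fin (n + 1) → ℝ, Maj x' y' → x' ∈ unitaryOrbitDiagonals y') :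
    x ∈ unitaryOrbitDiagonals y := by
  have hP := (maj_iff_prefixSum hx hy).1 h
  have h₀ : x 0 ≤ y 0 := by simpa [prefixSum_succ_eq_add_comp_succ] using hP.1 1
  have hlast : y (Fin.last (n + 1)) ≤ x 0 := by
    linarith [hP.1 (n + 1), hP.2, sum_eq_prefixSum_add_last x, sum_eq_prefixSum_add_last y,
      hx (Fin.zero_le (Fin.last (n + 1)))]
  obtain ⟨j, hlo, hhi⟩ := exists_succ_le_le_castSucc y hlast h₀
  obtain ⟨V, hV, hVx⟩ := ih _ _ (maj_comp_succ_mergeAt hx hy h hlo hhi)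
  obtain ⟨c, s, hcs, hc⟩ := exists_sq_add_sq_eq_one_and_eq hlo hhi
  -- `σ.symm` moves `y j` to position `0` and `y (j + 1)` to position `j + 1`.
  set σ := j.castSucc.cycleRange
  have hmerge : Function.update ((y ∘ σ.symm) ∘ Fin.succ) j
      (s ^ 2 * (y ∘ σ.symm) 0 + c ^ 2 * (y ∘ σ.symm) j.succ) = mergeAt y j (x 0) := by
    have hz : (y ∘ σ.symm) ∘ Fin.succ = y ∘ j.castSucc.succAbove := funext fun i => by simp [σ]
    simp only [mergeAt, hz]
    congr 1
    simp only [Function.comp_apply, Fin.cycleRange_symm_zero, Fin.cycleRange_symm_succ,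
      Fin.succAbove_castSucc_self, σ]
    linear_combination (y j.castSucc + y j.succ) * hcs - hc
  have hassoc : ∀ A B D : Matrix (Fin (n + 2)) (Fin (n + 2)) ℂ,
      A * B * D * (A * B)ᴴ = A * (B * D * Bᴴ) * Aᴴ := by
    intros; simp only [conjTranspose_mul, mul_assoc]
  rw [← comp_perm_mem_unitaryOrbitDiagonals_iff 1 σ.symm]
  refine ⟨extendByOne V * planeReflection j c s,
    mul_mem (extendByOne_mem_unitaryGroup hV) (planeReflection_mem_unitaryGroup j hcs), fun i => ?_⟩
  rw [hassoc]
  cases i using Fin.cases with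
  | zero =>
    rw [extendByOne_conj_zero_zero, planeReflection_conj_zero_zero]
    simp [σ, hc]
  | succ i =>
    rw [extendByOne_conj_succ_succ, planeReflection_conj_submatrix_succ, hmerge, hVx i]
    rfl

lemma antitone_sortDesc (x : Fin n → ℝ) : Antitone (sortDesc x) :=
  fun _ _ hij => Tuple.monotone_sort x (Fin.rev_le_rev.2 hij)

lemma exists_perm_sortDesc_eq (x : Fin n → ℝ) : ∃ σ : Equiv.Perm (Fin n), sortDesc x = x ∘ σ :=
  ⟨Fin.revPerm.trans (Tuple.sort x), rfl⟩

theorem mem_unitaryOrbitDiagonals_of_maj : ∀ {n : ℕ} {x y : Fin n → ℝ}, Maj x y →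
    x ∈ unitaryOrbitDiagonals y
  | 0, _, _, _ => ⟨1, one_mem _, fun i => i.elim0⟩
  | 1, x, y, h => by
    have hxy : x = y := funext fun i => by simpa [Fin.fin_one_eq_zero i] using h.2
    exact hxy ▸ self_mem_unitaryOrbitDiagonals y
  | n + 2, x, y, h => by
    obtain ⟨σ, hσ⟩ := exists_perm_sortDesc_eq x
    obtain ⟨τ, hτ⟩ := exists_perm_sortDesc_eq y
    rw [← comp_perm_mem_unitaryOrbitDiagonals_iff σ τ, ← hσ, ← hτ]
    exact mem_unitaryOrbitDiagonals_of_antitone (antitone_sortDesc x) (antitone_sortDesc y)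
      (by rwa [hσ, hτ, maj_comp_perm_iff]) fun _ _ => mem_unitaryOrbitDiagonals_of_maj

theorem mem_unitaryOrbitDiagonals_iff_maj {x y : Fin n → ℝ} :
    x ∈ unitaryOrbitDiagonals y ↔ Maj x y :=
  ⟨maj_of_mem_unitaryOrbitDiagonals, mem_unitaryOrbitDiagonals_of_maj⟩

lemma Matrix.IsHermitian.setOf_re_diag_conj_eq {ι : Type*} [Fintype ι] [DecidableEq ι]
    {A : Matrix ι ι ℂ} (hA : A.IsHermitian) :
    {d : ι → ℝ | ∃ U ∈ unitaryGroup ι ℂ, d = fun i => ((U * A * Uᴴ) i i).re} =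
      unitaryOrbitDiagonals hA.eigenvalues := by
  set V : Matrix ι ι ℂ := (hA.eigenvectorUnitary : Matrix ι ι ℂ)
  have hconj : ∀ U : Matrix ι ι ℂ, U * A * Uᴴ =
      U * V * diagonal (fun m => (hA.eigenvalues m : ℂ)) * (U * V)ᴴ := fun U => by
    conv_lhs => rw [hA.spectral_theorem]
    simp [V, conjTranspose_mul, star_eq_conjTranspose, mul_assoc]
    rfl
  ext d
  constructor
  · rintro ⟨U, hU, rfl⟩
    refine ⟨U * V, mul_mem hU (hA.eigenvectorUnitary).2, fun i => ?_⟩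
    dsimp only
    rw [hconj, mul_diagonal_mul_conjTranspose_apply_self, Complex.ofReal_re]
  · rintro ⟨W, hW, hd⟩
    have hWV : W * Vᴴ * V = W := by
      rw [mul_assoc, ← star_eq_conjTranspose, Unitary.coe_star_mul_self, mul_one]
    refine ⟨W * Vᴴ, mul_mem hW (Unitary.star_mem (hA.eigenvectorUnitary).2), funext fun i => ?_⟩
    rw [hconj, hWV, hd i, Complex.ofReal_re]

theorem diag_unitary_orbit_eq_majorized_general {n : ℕ} (ρ : Matrix (Fin n) (Fin n) ℂ)
    (hρ : ρ.PosSemidef) :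
    {d : Fin n → ℝ | ∃ U ∈ Matrix.unitaryGroup (Fin n) ℂ,
        d = fun i => ((U * ρ * Uᴴ) i i).re} =
      {u : Fin n → ℝ | Maj u (sortDesc hρ.1.eigenvalues)} := by
  obtain ⟨σ, hσ⟩ := exists_perm_sortDesc_eq hρ.1.eigenvalues
  rw [hρ.1.setOf_re_diag_conj_eq]
  ext u
  simpa [hσ, mem_unitaryOrbitDiagonals_iff_maj] using (maj_comp_perm_iff (x := u) 1 σ).symm

/-- Schur–Horn for the unitary orbit of a density matrix: the achievable diagonals of
`UρU†` are exactly the vectors majorized by the sorted eigenvalue vector `λ↓(ρ)`. -/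
theorem diag_unitary_orbit_eq_majorized {n : ℕ} (ρ : Matrix (Fin n) (Fin n) ℂ)
    (hρ : ρ.PosSemidef) (htr : ρ.trace = 1) :
    {d : Fin n → ℝ | ∃ U ∈ Matrix.unitaryGroup (Fin n) ℂ,
        d = fun i => ((U * ρ * Uᴴ) i i).re} =
      {u : Fin n → ℝ | Maj u (sortDesc hρ.1.eigenvalues)} :=
  diag_unitary_orbit_eq_majorized_general ρ hρ
end

section
/- The poset ⟨Δₙ↓, ≺⟩ of nonincreasingly ordered probability vectors under majorization is a lattice: every pair x, y ∈ Δₙ↓ has a least upper bound x ∨ y and a greatest lower bound x ∧ y in Δₙ↓. -/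
/-- Partial sum of the first `k` entries. -/
def psum {n : ℕ} (x : Fin n → ℝ) (k : ℕ) : ℝ :=
  ∑ i ∈ Finset.univ.filter (fun i : Fin n => (i : ℕ) < k), x i

/-- Majorization for nonincreasingly ordered vectors: partial-sum inequalities plus equal totals. -/
def MajS {n : ℕ} (x y : Fin n → ℝ) : Prop :=
  (∀ k, k < n → psum x k ≤ psum y k) ∧ (∑ i, x i = ∑ i, y i)

/-- Membership in `Δₙ↓`: nonnegative, nonincreasing, summing to 1. -/
def memDeltaDown {n : ℕ} (x : Fin n → ℝ) : Prop :=
  (∀ i, 0 ≤ x i) ∧ Antitone x ∧ ∑ i, x i = 1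

namespace MajLat

lemma psum_zero {n : ℕ} (x : Fin n → ℝ) : psum x 0 = 0 := by
  simp [psum]

lemma psum_succ {n : ℕ} (x : Fin n → ℝ) (k : ℕ) (hk : k < n) :
    psum x (k + 1) = psum x k + x ⟨k, hk⟩ := by
  unfold psum
  have hset : Finset.univ.filter (fun i : Fin n => (i : ℕ) < k + 1)
      = insert ⟨k, hk⟩ (Finset.univ.filter (fun i : Fin n => (i : ℕ) < k)) := by
    ext i
    simp only [Finset.mem_filter, Finset.mem_univ, true_and, Finset.mem_insert, Fin.ext_iff]
    omega
  rw [hset, Finset.sum_insert (by simp)]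
  ring

lemma psum_total {n : ℕ} (x : Fin n → ℝ) : psum x n = ∑ i, x i := by
  unfold psum
  congr 1
  ext i
  simp [i.isLt]

lemma psum_vec {n : ℕ} (p : ℕ → ℝ) (k : ℕ) (hk : k ≤ n) :
    psum (fun i : Fin n => p (i + 1) - p i) k = p k - p 0 := by
  induction k with
  | zero => simp [psum_zero]
  | succ m ih =>
      have hm : m < n := hk
      rw [psum_succ _ m hm, ih (le_of_lt hm)]
      ring

lemma psum_le_total {n : ℕ} (x : Fin n → ℝ) (hx0 : ∀ i, 0 ≤ x i) (k : ℕ) :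
    psum x k ≤ ∑ i, x i := by
  unfold psum
  exact Finset.sum_le_sum_of_subset_of_nonneg (Finset.filter_subset _ _)
    (fun i _ _ => hx0 i)

lemma psum_mono {n : ℕ} (x : Fin n → ℝ) (hx0 : ∀ i, 0 ≤ x i) {k m : ℕ} (h : k ≤ m) :
    psum x k ≤ psum x m := by
  unfold psum
  refine Finset.sum_le_sum_of_subset_of_nonneg ?_ (fun i _ _ => hx0 i)
  intro i hi
  simp only [Finset.mem_filter, Finset.mem_univ, true_and] at hi ⊢
  omega

lemma psum_concave {n : ℕ} (x : Fin n → ℝ) (hx : Antitone x) (k : ℕ) (hk : k + 2 ≤ n) :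
    psum x k + psum x (k + 2) ≤ 2 * psum x (k + 1) := by
  have h1 : k < n := by omega
  have h2 : k + 1 < n := by omega
  rw [show k + 2 = (k + 1) + 1 from rfl, psum_succ x (k + 1) h2, psum_succ x k h1]
  have : x ⟨k + 1, h2⟩ ≤ x ⟨k, h1⟩ := hx (by simp [Fin.le_def])
  linarith

lemma incr_anti {n : ℕ} (p : ℕ → ℝ)
    (hconc : ∀ k, k + 2 ≤ n → p k + p (k + 2) ≤ 2 * p (k + 1)) :
    ∀ a b, a ≤ b → b + 1 ≤ n → p (b + 1) - p b ≤ p (a + 1) - p a := by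
  intro a b hab
  induction b, hab using Nat.le_induction with
  | base => intro _; exact le_refl _
  | succ b hb ih =>
      intro hbn
      have h1 := hconc b (by omega)
      have h2 := ih (by omega)
      have : p (b + 1 + 1) = p (b + 2) := by norm_num
      rw [this]
      linarith

/-- Build a member of Δₙ↓ from a good partial-sum profile. -/
lemma mem_of_profile {n : ℕ} (p : ℕ → ℝ) (h0 : p 0 = 0) (hn : p n = 1)
    (hconc : ∀ k, k + 2 ≤ n → p k + p (k + 2) ≤ 2 * p (k + 1))
    (hlast : p (n - 1) ≤ p n) :
    memDeltaDown (fun i : Fin n => p (i + 1) - p i) := by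
  have hd : ∀ i : Fin n, 0 ≤ p (i + 1) - p i := by
    intro i
    have hn1 : 1 ≤ n := by have := i.isLt; omega
    have h1 : p ((n - 1) + 1) - p (n - 1) ≤ p (i + 1) - p i :=
      incr_anti p hconc i (n - 1) (by omega) (by omega)
    have : (n - 1) + 1 = n := by omega
    rw [this] at h1
    linarith
  refine ⟨hd, ?_, ?_⟩
  · intro i j hij
    exact incr_anti p hconc i j hij j.isLt
  · have := psum_vec (n := n) p n le_rfl
    rw [psum_total] at this
    rw [this, h0, hn]; ring

end MajLat

/-- `⟨Δₙ↓, ≺⟩` is a lattice: every pair has a join (least upper bound) and a meet (greatest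
lower bound) in `Δₙ↓`. -/
theorem majorization_lattice (n : ℕ) (x y : Fin n → ℝ)
    (hx : memDeltaDown x) (hy : memDeltaDown y) :
    (∃ j : Fin n → ℝ, memDeltaDown j ∧ MajS x j ∧ MajS y j ∧
      ∀ z : Fin n → ℝ, memDeltaDown z → MajS x z → MajS y z → MajS j z) ∧
    (∃ m : Fin n → ℝ, memDeltaDown m ∧ MajS m x ∧ MajS m y ∧
      ∀ z : Fin n → ℝ, memDeltaDown z → MajS z x → MajS z y → MajS z m) := by
  classical
  open MajLat in
  rcases Nat.eq_zero_or_pos n with hn0 | hn1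
  · exfalso
    have h1 := hx.2.2
    subst hn0
    simp at h1
  have hxtot : psum x n = 1 := by rw [MajLat.psum_total]; exact hx.2.2
  have hytot : psum y n = 1 := by rw [MajLat.psum_total]; exact hy.2.2
  constructor
  · -- join: least concave majorant of max of partial sums
    set S : Set (ℕ → ℝ) := {f | (∀ k, k + 2 ≤ n → f k + f (k + 2) ≤ 2 * f (k + 1)) ∧
        (∀ k, k ≤ n → psum x k ≤ f k) ∧ (∀ k, k ≤ n → psum y k ≤ f k) ∧
        (∀ k, k ≤ n → f k ≤ 1) ∧ f 0 = 0} with hS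
    set f0 : ℕ → ℝ := fun k => if k = 0 then 0 else 1 with hf0
    have hf0S : f0 ∈ S := by
      refine ⟨?_, ?_, ?_, ?_, by simp [hf0]⟩
      · intro k hk
        rcases Nat.eq_zero_or_pos k with h | h
        · subst h; norm_num [hf0]
        · have h1 : ¬ (k = 0) := by omega
          have h2 : ¬ (k + 2 = 0) := by omega
          have h3 : ¬ (k + 1 = 0) := by omega
          simp only [hf0, h1, h2, h3, if_false]
          norm_num
      · intro k hk
        rcases Nat.eq_zero_or_pos k with h | h
        · simp [hf0, h, MajLat.psum_zero]
        · have h2 : ¬ (k = 0) := by omega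
          simp only [hf0, h2, if_false]
          calc psum x k ≤ ∑ i, x i := MajLat.psum_le_total x hx.1 k
            _ = 1 := hx.2.2
      · intro k hk
        rcases Nat.eq_zero_or_pos k with h | h
        · simp [hf0, h, MajLat.psum_zero]
        · have h2 : ¬ (k = 0) := by omega
          simp only [hf0, h2, if_false]
          calc psum y k ≤ ∑ i, y i := MajLat.psum_le_total y hy.1 k
            _ = 1 := hy.2.2
      · intro k hk
        rcases Nat.eq_zero_or_pos k with h | h
        · subst h; norm_num [hf0]
        · have h1 : ¬ (k = 0) := by omega
          simp only [hf0, h1, if_false]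
          exact le_refl 1
    set c : ℕ → ℝ := fun k => sInf ((fun f => f k) '' S) with hc
    have hne : ∀ k, ((fun f => f k) '' S).Nonempty := fun k => ⟨f0 k, f0, hf0S, rfl⟩
    have hbdd : ∀ k, k ≤ n → BddBelow ((fun f => f k) '' S) := by
      intro k hk
      exact ⟨psum x k, by rintro v ⟨f, hf, rfl⟩; exact hf.2.1 k hk⟩
    have hcle : ∀ f ∈ S, ∀ k, k ≤ n → c k ≤ f k := by
      intro f hf k hk
      exact csInf_le (hbdd k hk) ⟨f, hf, rfl⟩
    have hlbx : ∀ k, k ≤ n → psum x k ≤ c k := by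
      intro k hk
      exact le_csInf (hne k) (by rintro v ⟨f, hf, rfl⟩; exact hf.2.1 k hk)
    have hlby : ∀ k, k ≤ n → psum y k ≤ c k := by
      intro k hk
      exact le_csInf (hne k) (by rintro v ⟨f, hf, rfl⟩; exact hf.2.2.1 k hk)
    have hub1 : ∀ k, k ≤ n → c k ≤ 1 := by
      intro k hk
      refine (hcle f0 hf0S k hk).trans ?_
      rcases Nat.eq_zero_or_pos k with h | h
      · subst h; norm_num [hf0]
      · have h1 : ¬ (k = 0) := by omega
        simp only [hf0, h1, if_false]
        exact le_refl 1
    have hc0 : c 0 = 0 := by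
      have h1 : c 0 ≤ 0 := (hcle f0 hf0S 0 (by omega)).trans (by simp [hf0])
      have h2 : (0 : ℝ) ≤ c 0 := by
        have := hlbx 0 (by omega)
        rwa [MajLat.psum_zero] at this
      linarith
    have hcn : c n = 1 := by
      have h1 := hub1 n le_rfl
      have h2 := hlbx n le_rfl
      rw [hxtot] at h2
      linarith
    have hconc : ∀ k, k + 2 ≤ n → c k + c (k + 2) ≤ 2 * c (k + 1) := by
      intro k hk
      have key : ∀ f ∈ S, c k + c (k + 2) ≤ 2 * f (k + 1) := by
        intro f hf
        have h1 := hcle f hf k (by omega)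
        have h2 := hcle f hf (k + 2) hk
        have h3 := hf.1 k hk
        linarith
      have h4 : (c k + c (k + 2)) / 2 ≤ c (k + 1) :=
        le_csInf (hne _) (by rintro v ⟨f, hf, rfl⟩; linarith [key f hf])
      linarith
    have hlast : c (n - 1) ≤ c n := by
      rw [hcn]; exact hub1 (n - 1) (by omega)
    refine ⟨fun i : Fin n => c (i + 1) - c i,
      MajLat.mem_of_profile c hc0 hcn hconc hlast, ?_, ?_, ?_⟩
    · constructor
      · intro k hk
        rw [MajLat.psum_vec c k (le_of_lt hk), hc0]
        have := hlbx k (le_of_lt hk); linarith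
      · have h5 := MajLat.psum_vec (n := n) c n le_rfl
        rw [MajLat.psum_total] at h5
        rw [hx.2.2, h5, hc0, hcn]; ring
    · constructor
      · intro k hk
        rw [MajLat.psum_vec c k (le_of_lt hk), hc0]
        have := hlby k (le_of_lt hk); linarith
      · have h5 := MajLat.psum_vec (n := n) c n le_rfl
        rw [MajLat.psum_total] at h5
        rw [hy.2.2, h5, hc0, hcn]; ring
    · intro z hz hxz hyz
      have hztot : psum z n = 1 := by rw [MajLat.psum_total]; exact hz.2.2
      have hzS : psum z ∈ S := by
        refine ⟨fun k hk => MajLat.psum_concave z hz.2.1 k hk, ?_, ?_, ?_, MajLat.psum_zero z⟩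
        · intro k hk
          rcases eq_or_lt_of_le hk with h | h
          · rw [h, hxtot, hztot]
          · exact hxz.1 k h
        · intro k hk
          rcases eq_or_lt_of_le hk with h | h
          · rw [h, hytot, hztot]
          · exact hyz.1 k h
        · intro k hk
          calc psum z k ≤ ∑ i, z i := MajLat.psum_le_total z hz.1 k
            _ = 1 := hz.2.2
      constructor
      · intro k hk
        rw [MajLat.psum_vec c k (le_of_lt hk), hc0]
        have := hcle (psum z) hzS k (le_of_lt hk); linarith
      · have h5 := MajLat.psum_vec (n := n) c n le_rfl
        rw [MajLat.psum_total] at h5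
        rw [hz.2.2, h5, hc0, hcn]; ring
  · -- meet: pointwise min of partial sums
    set pm : ℕ → ℝ := fun k => min (psum x k) (psum y k) with hpm
    have hpm0 : pm 0 = 0 := by simp [hpm, MajLat.psum_zero]
    have hpmn : pm n = 1 := by simp [hpm, hxtot, hytot]
    have hpmconc : ∀ k, k + 2 ≤ n → pm k + pm (k + 2) ≤ 2 * pm (k + 1) := by
      intro k hk
      have hxc := MajLat.psum_concave x hx.2.1 k hk
      have hyc := MajLat.psum_concave y hy.2.1 k hk
      have h1 : pm k + pm (k + 2) ≤ 2 * psum x (k + 1) := by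
        have := min_le_left (psum x k) (psum y k)
        have := min_le_left (psum x (k + 2)) (psum y (k + 2))
        simp only [hpm]
        linarith
      have h2 : pm k + pm (k + 2) ≤ 2 * psum y (k + 1) := by
        have := min_le_right (psum x k) (psum y k)
        have := min_le_right (psum x (k + 2)) (psum y (k + 2))
        simp only [hpm]
        linarith
      simp only [hpm]
      rcases le_total (psum x (k + 1)) (psum y (k + 1)) with h | h
      · rw [min_eq_left h]; exact h1
      · rw [min_eq_right h]; exact h2
    have hpmlast : pm (n - 1) ≤ pm n := by
      have h1 := MajLat.psum_mono x hx.1 (Nat.sub_le n 1)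
      have h2 := MajLat.psum_mono y hy.1 (Nat.sub_le n 1)
      exact min_le_min h1 h2
    refine ⟨fun i : Fin n => pm (i + 1) - pm i,
      MajLat.mem_of_profile pm hpm0 hpmn hpmconc hpmlast, ?_, ?_, ?_⟩
    · constructor
      · intro k hk
        rw [MajLat.psum_vec pm k (le_of_lt hk), hpm0]
        have := min_le_left (psum x k) (psum y k)
        simp only [hpm]
        linarith
      · have h5 := MajLat.psum_vec (n := n) pm n le_rfl
        rw [MajLat.psum_total] at h5
        rw [hx.2.2, h5, hpm0, hpmn]; ring
    · constructor
      · intro k hk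
        rw [MajLat.psum_vec pm k (le_of_lt hk), hpm0]
        have := min_le_right (psum x k) (psum y k)
        simp only [hpm]
        linarith
      · have h5 := MajLat.psum_vec (n := n) pm n le_rfl
        rw [MajLat.psum_total] at h5
        rw [hy.2.2, h5, hpm0, hpmn]; ring
    · intro z hz hzx hzy
      constructor
      · intro k hk
        rw [MajLat.psum_vec pm k (le_of_lt hk), hpm0]
        have h1 := hzx.1 k hk
        have h2 := hzy.1 k hk
        simp only [hpm]
        have := le_min h1 h2
        linarith
      · have h5 := MajLat.psum_vec (n := n) pm n le_rfl
        rw [MajLat.psum_total] at h5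
        rw [hz.2.2, h5, hpm0, hpmn]; ring
end

section
/- The majorization lattice ⟨Δₙ↓, ≺⟩ is a complete lattice: every nonempty subset S ⊆ Δₙ↓ has an infimum ⋀S and a supremum ⋁S in Δₙ↓. -/

lemma psum_zero {n : ℕ} (x : Fin n → ℝ) : psum x 0 = 0 := by
  unfold psum; simp

lemma psum_succ {n : ℕ} (x : Fin n → ℝ) (k : ℕ) (hk : k < n) :
    psum x (k+1) = psum x k + x ⟨k, hk⟩ := by
  unfold psum
  rw [show (Finset.univ.filter fun i : Fin n => (i:ℕ) < k+1) =
      insert ⟨k,hk⟩ (Finset.univ.filter fun i : Fin n => (i:ℕ) < k) from ?_,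
    Finset.sum_insert (by simp)]
  · ring
  · ext i; simp [Fin.ext_iff]; omega

lemma psum_top {n : ℕ} (x : Fin n → ℝ) (k : ℕ) (hk : n ≤ k) :
    psum x k = ∑ i, x i := by
  unfold psum
  congr 1
  rw [Finset.filter_true_of_mem]
  intro i _; exact lt_of_lt_of_le i.isLt hk

lemma psum_mono {n : ℕ} (x : Fin n → ℝ) (hx : ∀ i, 0 ≤ x i) : Monotone (psum x) := by
  intro a b hab
  unfold psum
  apply Finset.sum_le_sum_of_subset_of_nonneg
  · intro i hi
    simp only [Finset.mem_filter, Finset.mem_univ, true_and] at hi ⊢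
    omega
  · intro i _ _; exact hx i

lemma psum_nonneg {n : ℕ} (x : Fin n → ℝ) (hx : ∀ i, 0 ≤ x i) (k : ℕ) :
    0 ≤ psum x k :=
  Finset.sum_nonneg fun i _ => hx i

lemma psum_le_one {n : ℕ} (x : Fin n → ℝ) (hx : memDeltaDown x) (k : ℕ) :
    psum x k ≤ 1 := by
  rcases le_or_gt k n with h | h
  · calc psum x k ≤ psum x n := psum_mono x hx.1 h
    _ = 1 := by rw [psum_top x n le_rfl, hx.2.2]
  · rw [psum_top x k h.le, hx.2.2]

lemma psum_concave {n : ℕ} (x : Fin n → ℝ) (hx : Antitone x) (k : ℕ) (hk : k + 2 ≤ n) :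
    psum x k + psum x (k+2) ≤ 2 * psum x (k+1) := by
  have h1 : k < n := by omega
  have h2 : k + 1 < n := by omega
  rw [psum_succ x (k+1) h2, psum_succ x k h1]
  have := hx (show (⟨k, h1⟩ : Fin n) ≤ ⟨k+1, h2⟩ by simp)
  linarith

lemma incr_anti {n : ℕ} (F : ℕ → ℝ)
    (hconc : ∀ k, k + 2 ≤ n → F k + F (k+2) ≤ 2 * F (k+1))
    (a b : ℕ) (hab : a ≤ b) (hb : b + 1 ≤ n) :
    F (b+1) - F b ≤ F (a+1) - F a := by
  induction b with
  | zero => obtain rfl : a = 0 := by omega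
            exact le_refl _
  | succ m ih =>
    rcases Nat.lt_or_ge a (m+1) with h | h
    · have h1 := ih (by omega) (by omega)
      have h2 := hconc m (by omega)
      linarith
    · obtain rfl : a = m + 1 := by omega
      exact le_refl _

lemma build {n : ℕ} (F : ℕ → ℝ) (h0 : F 0 = 0) (hn : F n = 1)
    (hconc : ∀ k, k + 2 ≤ n → F k + F (k+2) ≤ 2 * F (k+1))
    (hlast : F (n-1) ≤ F n) (hn1 : 1 ≤ n) :
    memDeltaDown (fun i : Fin n => F ((i:ℕ)+1) - F i) ∧
    ∀ k, k ≤ n → psum (fun i : Fin n => F ((i:ℕ)+1) - F i) k = F k := by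
  set v : Fin n → ℝ := fun i : Fin n => F ((i:ℕ)+1) - F i with hv
  have hincr : ∀ a b : ℕ, a ≤ b → b + 1 ≤ n → F (b+1) - F b ≤ F (a+1) - F a :=
    incr_anti F hconc
  have hnonneg : ∀ i : Fin n, 0 ≤ v i := by
    intro i
    have h1 : F n - F (n-1) ≤ F ((i:ℕ)+1) - F (i:ℕ) := by
      have := hincr (i:ℕ) (n-1) (by omega) (by omega)
      have he : n - 1 + 1 = n := by omega
      rw [he] at this
      exact this
    simp only [hv]
    linarith
  have hanti : Antitone v := by
    intro i j hij
    exact hincr (i:ℕ) (j:ℕ) hij (by omega)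
  have hpsum : ∀ k, k ≤ n → psum v k = F k := by
    intro k hk
    induction k with
    | zero => rw [psum_zero, h0]
    | succ m ih =>
      rw [psum_succ v m (by omega), ih (by omega)]
      simp only [hv]
      ring
  have hsum : ∑ i, v i = 1 := by
    rw [← psum_top v n le_rfl, hpsum n le_rfl, hn]
  exact ⟨⟨hnonneg, hanti, hsum⟩, hpsum⟩

/-- `⟨Δₙ↓, ≺⟩` is a complete lattice: every nonempty subset has an infimum and a supremum
in `Δₙ↓`. -/
theorem majorization_complete_lattice (n : ℕ) (S : Set (Fin n → ℝ))
    (hS : ∀ x ∈ S, memDeltaDown x) (hne : S.Nonempty) :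
    (∃ m : Fin n → ℝ, memDeltaDown m ∧ (∀ x ∈ S, MajS m x) ∧
      ∀ z : Fin n → ℝ, memDeltaDown z → (∀ x ∈ S, MajS z x) → MajS z m) ∧
    (∃ j : Fin n → ℝ, memDeltaDown j ∧ (∀ x ∈ S, MajS x j) ∧
      ∀ z : Fin n → ℝ, memDeltaDown z → (∀ x ∈ S, MajS x z) → MajS j z) := by
  obtain ⟨x₀, hx₀⟩ := hne
  have hx₀d := hS x₀ hx₀
  rcases Nat.eq_zero_or_pos n with rfl | hn1
  · exfalso
    have := hx₀d.2.2
    simp at this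
  have hne' : S.Nonempty := ⟨x₀, hx₀⟩
  have himg : ∀ k, ((fun x => psum x k) '' S).Nonempty := fun k => hne'.image _
  have hpsn : ∀ x ∈ S, psum x n = 1 := fun x hx => by
    rw [psum_top x n le_rfl, (hS x hx).2.2]
  -- the pointwise supremum of partial sums
  set g : ℕ → ℝ := fun k => sSup ((fun x => psum x k) '' S) with hg
  have hbddA : ∀ k, BddAbove ((fun x => psum x k) '' S) := by
    intro k
    refine ⟨1, ?_⟩
    rintro a ⟨x, hx, rfl⟩
    exact psum_le_one x (hS x hx) k
  have hgle : ∀ x ∈ S, ∀ k, psum x k ≤ g k := fun x hx k =>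
    le_csSup (hbddA k) ⟨x, hx, rfl⟩
  have hgub : ∀ k (a : ℝ), (∀ x ∈ S, psum x k ≤ a) → g k ≤ a := by
    intro k a ha
    apply csSup_le (himg k)
    rintro b ⟨x, hx, rfl⟩
    exact ha x hx
  have hg0 : g 0 = 0 := le_antisymm
    (hgub 0 0 fun x _ => le_of_eq (psum_zero x))
    ((psum_zero x₀ ▸ hgle x₀ hx₀ 0))
  have hgn : g n = 1 := le_antisymm
    (hgub n 1 fun x hx => le_of_eq (hpsn x hx))
    (hpsn x₀ hx₀ ▸ hgle x₀ hx₀ n)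
  have hgone : ∀ k, g k ≤ 1 := fun k => hgub k 1 fun x hx => psum_le_one x (hS x hx) k
  ------------------------------------------------------------------
  -- MEET
  ------------------------------------------------------------------
  constructor
  · set f : ℕ → ℝ := fun k => sInf ((fun x => psum x k) '' S) with hf
    have hbddB : ∀ k, BddBelow ((fun x => psum x k) '' S) := by
      intro k
      refine ⟨0, ?_⟩
      rintro a ⟨x, hx, rfl⟩
      exact psum_nonneg x (hS x hx).1 k
    have hfle : ∀ x ∈ S, ∀ k, f k ≤ psum x k := fun x hx k =>
      csInf_le (hbddB k) ⟨x, hx, rfl⟩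
    have hflb : ∀ k (a : ℝ), (∀ x ∈ S, a ≤ psum x k) → a ≤ f k := by
      intro k a ha
      apply le_csInf (himg k)
      rintro b ⟨x, hx, rfl⟩
      exact ha x hx
    have hf0 : f 0 = 0 := le_antisymm
      (psum_zero x₀ ▸ hfle x₀ hx₀ 0)
      (hflb 0 0 fun x _ => le_of_eq (psum_zero x).symm)
    have hfn : f n = 1 := le_antisymm
      (hpsn x₀ hx₀ ▸ hfle x₀ hx₀ n)
      (hflb n 1 fun x hx => le_of_eq (hpsn x hx).symm)
    have hfconc : ∀ k, k + 2 ≤ n → f k + f (k+2) ≤ 2 * f (k+1) := by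
      intro k hk
      have : (f k + f (k+2)) / 2 ≤ f (k+1) := by
        apply hflb
        intro x hx
        have h1 := hfle x hx k
        have h2 := hfle x hx (k+2)
        have h3 := psum_concave x (hS x hx).2.1 k hk
        linarith
      linarith
    have hflast : f (n-1) ≤ f n := by
      have h1 := hfle x₀ hx₀ (n-1)
      have h2 : psum x₀ (n-1) ≤ 1 := psum_le_one x₀ hx₀d (n-1)
      rw [hfn]; linarith
    obtain ⟨hm, hmps⟩ := build f hf0 hfn hfconc hflast hn1
    refine ⟨_, hm, ?_, ?_⟩
    · intro x hx
      constructor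
      · intro k hk
        rw [hmps k hk.le]
        exact hfle x hx k
      · rw [hm.2.2, (hS x hx).2.2]
    · intro z hz hzx
      constructor
      · intro k hk
        rw [hmps k hk.le]
        apply hflb
        intro x hx
        exact (hzx x hx).1 k hk
      · rw [hz.2.2, hm.2.2]
  ------------------------------------------------------------------
  -- JOIN
  ------------------------------------------------------------------
  · set C : Set (ℕ → ℝ) :=
      {c | (∀ k, k + 2 ≤ n → c k + c (k+2) ≤ 2 * c (k+1)) ∧ ∀ k, k ≤ n → g k ≤ c k}
      with hC
    have hCone : (fun _ : ℕ => (1:ℝ)) ∈ C := by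
      constructor
      · intro k _; norm_num
      · intro k _; exact hgone k
    have hCid : (fun k : ℕ => (k:ℝ)) ∈ C := by
      constructor
      · intro k _; push_cast; linarith
      · intro k _
        rcases Nat.eq_zero_or_pos k with rfl | hk
        · simp [hg0]
        · calc g k ≤ 1 := hgone k
            _ ≤ (k:ℝ) := by exact_mod_cast hk
    have hCne : C.Nonempty := ⟨_, hCone⟩
    set h : ℕ → ℝ := fun k => sInf ((fun c => c k) '' C) with hh
    have hbddC : ∀ k, k ≤ n → BddBelow ((fun c => c k) '' C) := by
      intro k hk
      refine ⟨g k, ?_⟩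
      rintro a ⟨c, hc, rfl⟩
      exact hc.2 k hk
    have hhle : ∀ c ∈ C, ∀ k, k ≤ n → h k ≤ c k := fun c hc k hk =>
      csInf_le (hbddC k hk) ⟨c, hc, rfl⟩
    have hhlb : ∀ k (a : ℝ), (∀ c ∈ C, a ≤ c k) → a ≤ h k := by
      intro k a ha
      apply le_csInf (hCne.image _)
      rintro b ⟨c, hc, rfl⟩
      exact ha c hc
    have hhge : ∀ k, k ≤ n → g k ≤ h k := fun k hk =>
      hhlb k (g k) fun c hc => hc.2 k hk
    have hh0 : h 0 = 0 := le_antisymm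
      (by simpa using hhle _ hCid 0 (Nat.zero_le n))
      (hg0 ▸ hhge 0 (Nat.zero_le n))
    have hhn : h n = 1 := le_antisymm
      (hhle _ hCone n le_rfl)
      (hgn ▸ hhge n le_rfl)
    have hhconc : ∀ k, k + 2 ≤ n → h k + h (k+2) ≤ 2 * h (k+1) := by
      intro k hk
      have : (h k + h (k+2)) / 2 ≤ h (k+1) := by
        apply hhlb
        intro c hc
        have h1 := hhle c hc k (by omega)
        have h2 := hhle c hc (k+2) (by omega)
        have h3 := hc.1 k hk
        linarith
      linarith
    have hhlast : h (n-1) ≤ h n := by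
      have := hhle _ hCone (n-1) (by omega)
      rw [hhn]; exact this
    obtain ⟨hj, hjps⟩ := build h hh0 hhn hhconc hhlast hn1
    refine ⟨_, hj, ?_, ?_⟩
    · intro x hx
      constructor
      · intro k hk
        rw [hjps k hk.le]
        exact (hgle x hx k).trans (hhge k hk.le)
      · rw [hj.2.2, (hS x hx).2.2]
    · intro z hz hxz
      have hcz : (fun k => psum z k) ∈ C := by
        constructor
        · intro k hk
          exact psum_concave z hz.2.1 k hk
        · intro k hk
          apply hgub
          intro x hx
          rcases Nat.lt_or_ge k n with hkn | hkn
          · exact (hxz x hx).1 k hkn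
          · have hkn' : k = n := by omega
            rw [hkn', hpsn x hx]
            show (1:ℝ) ≤ psum z n
            rw [psum_top z n le_rfl, hz.2.2]
      constructor
      · intro k hk
        rw [hjps k hk.le]
        exact hhle _ hcz k hk.le
      · rw [hj.2.2, hz.2.2]
end
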